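/- The assignment j(Σ_{w∈W} r_w T_w) = Σ_{w∈W} r_w (−q)^{ℓ(w)} (T_{w⁻¹})⁻¹ is a well-defined involutive endomorphism of the Hecke algebra H regarded as an R-algebra (it is R-linear, multiplicative, and j∘j = id). -/

import Mathlib

namespace KLPaper

open Polynomial
open scoped Classical

variable {B : Type*} {W : Type*} [Group W] {M : CoxeterMatrix B}

/-- The Bruhat order on a Coxeter group: generated by right multiplication by
reflections which increases the length. -/
def bruhatLE (cs : CoxeterSystem M W) : W → W → Prop :=
  Relation.ReflTransGen (fun x y =>
    (∃ t, cs.IsReflection t ∧ y = x * t) ∧ cs.length x < cs.length y)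

/-- A commutative ring `R` containing `ℤ[q,q⁻¹]`, with a direct sum decomposition
`R = ⊕_{k ∈ ℤ} R_k` into additive subgroups and an involutive ring endomorphism `conj`
such that `R_i R_j ⊆ R_{i+j}`, `conj R_i = R_{-i}`, `1 ∈ R_0`, `q ∈ R_2`, `conj q = q⁻¹`. -/
structure KLRing (R : Type*) [CommRing R] where
  q : R
  qinv : R
  q_qinv : q * qinv = 1
  grade : ℤ → AddSubgroup R
  decomp : DirectSum.IsInternal grade
  conj : R →+* R
  conj_conj : ∀ r : R, conj (conj r) = r
  grade_mul : ∀ (i j : ℤ) (r s : R), r ∈ grade i → s ∈ grade j → r * s ∈ grade (i + j)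
  conj_grade : ∀ (i : ℤ) (r : R), r ∈ grade i → conj r ∈ grade (-i)
  one_mem : (1 : R) ∈ grade 0
  q_mem : q ∈ grade 2
  conj_q : conj q = qinv
  laurent_inj : Function.Injective fun f : ℤ →₀ ℤ =>
    f.sum fun k c => c • (if 0 ≤ k then q ^ k.toNat else qinv ^ (-k).toNat)

variable {R : Type*} [CommRing R]

/-- The subgroup `R_0 + R_1 + ⋯ + R_{n-1} = ⊕_{i=0}^{n-1} R_i` of `R`. -/
def KLRing.gradeSum (K : KLRing R) (n : ℕ) : AddSubgroup R :=
  ⨆ i ∈ Finset.range n, K.grade (i : ℤ)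

/-- `r` belongs to `ℤ[q] ⊆ R`. -/
def KLRing.InZq (K : KLRing R) (r : R) : Prop :=
  ∃ p : Polynomial ℤ, Polynomial.aeval K.q p = r

/-- The Hecke algebra of `(W, S)` over `R`: the free `R`-module with basis
`{T_w}_{w ∈ W}`, with multiplication determined by `T_{w₁} T_{w₂} = T_{w₁ w₂}`
whenever `ℓ(w₁w₂) = ℓ(w₁) + ℓ(w₂)` and `(T_s + 1)(T_s - q) = 0` for `s ∈ S`. -/
structure Hecke (cs : CoxeterSystem M W) (R : Type*) [CommRing R] (q : R) where
  carrier : Type*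
  [ring : Ring carrier]
  [alg : Algebra R carrier]
  T : W → carrier
  basis : Module.Basis W R carrier
  basis_eq : ∀ w : W, basis w = T w
  T_mul : ∀ w₁ w₂ : W, cs.length (w₁ * w₂) = cs.length w₁ + cs.length w₂ →
    T w₁ * T w₂ = T (w₁ * w₂)
  T_quad : ∀ i : B, (T (cs.simple i) + 1) * (T (cs.simple i) - algebraMap R carrier q) = 0

attribute [instance] Hecke.ring Hecke.alg

variable {cs : CoxeterSystem M W}

/-- `bar` is the bar involution `Σ r_w T_w ↦ Σ conj(r_w) (T_{w⁻¹})⁻¹` of the Hecke algebra. -/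
def IsBar (K : KLRing R) (Hk : Hecke cs R K.q) (bar : Hk.carrier →+* Hk.carrier) : Prop :=
  ∀ (r : R) (w : W), bar (r • Hk.T w) = K.conj r • Ring.inverse (Hk.T w⁻¹)

/-- `j` is the involution `j(Σ r_w T_w) = Σ r_w (-q)^{ℓ(w)} (T_{w⁻¹})⁻¹` of the Hecke algebra. -/
def IsJ (K : KLRing R) (Hk : Hecke cs R K.q) (j : Hk.carrier →ₐ[R] Hk.carrier) : Prop :=
  ∀ w : W, j (Hk.T w) = (-K.q) ^ cs.length w • Ring.inverse (Hk.T w⁻¹)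

/-- `C` is the Kazhdan–Lusztig basis element `C_w`:
`C = Σ_{y ≤ w} P_{y,w} T_y` with `P_{w,w} = 1`,
`P_{y,w} ∈ ⊕_{i=0}^{ℓ(w)-ℓ(y)-1} R_i` for `y < w`, and `bar C = q^{-ℓ(w)} C`.
(The coefficient `P_{y,w}` of `C_w` is `Hk.basis.repr C y`.) -/
def IsKLElt (K : KLRing R) (Hk : Hecke cs R K.q)
    (bar : Hk.carrier →+* Hk.carrier) (w : W) (C : Hk.carrier) : Prop :=
  Hk.basis.repr C w = 1 ∧
  (∀ y : W, Hk.basis.repr C y ≠ 0 → bruhatLE cs y w) ∧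
  (∀ y : W, bruhatLE cs y w → y ≠ w →
    Hk.basis.repr C y ∈ K.gradeSum (cs.length w - cs.length y)) ∧
  bar C = K.qinv ^ cs.length w • C

/-- The standard parabolic subgroup `W_J = ⟨J⟩`. -/
def WJ (cs : CoxeterSystem M W) (J : Set B) : Subgroup W :=
  Subgroup.closure (cs.simple '' J)

/-- `W^J`: the set of minimal length coset representatives of `W/W_J`,
i.e. the `w ∈ W` with `ws > w` for all `s ∈ J`. -/
def minReps (cs : CoxeterSystem M W) (J : Set B) : Set W :=
  {w | ∀ i ∈ J, cs.length w < cs.length (w * cs.simple i)}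

/-- The Hecke algebra `H(W_J)` of the standard parabolic subgroup `W_J`
(with generating set `J`; the length function of `(W_J, J)` is the restriction
of that of `(W, S)`). -/
structure HeckeJ (cs : CoxeterSystem M W) (J : Set B) (R : Type*) [CommRing R] (q : R) where
  carrier : Type*
  [ring : Ring carrier]
  [alg : Algebra R carrier]
  T : WJ cs J → carrier
  basis : Module.Basis (WJ cs J) R carrier
  basis_eq : ∀ x, basis x = T x
  T_mul : ∀ x₁ x₂ : WJ cs J,
    cs.length ((x₁ : W) * (x₂ : W)) = cs.length (x₁ : W) + cs.length (x₂ : W) →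
    T x₁ * T x₂ = T (x₁ * x₂)
  T_quad : ∀ (i : B) (hi : i ∈ J),
    (T ⟨cs.simple i, Subgroup.subset_closure ⟨i, hi, rfl⟩⟩ + 1) *
      (T ⟨cs.simple i, Subgroup.subset_closure ⟨i, hi, rfl⟩⟩ - algebraMap R carrier q) = 0

attribute [instance] HeckeJ.ring HeckeJ.alg

/-- `(Mod, φ)` is (a realization of) the induced module `H^{J,a} = H ⊗_{H(W_J)} R^a`
together with `φ = φ^{J,a} : h ↦ h ⊗ 1^a`:  `φ` is surjective and its kernel is
the `R`-span of the elements `h (T_s - a)`, `s ∈ J`, which is exactly the kernel of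
`h ↦ h ⊗ 1^a`. -/
def IsInduced {q : R} (Hk : Hecke cs R q) (J : Set B) (a : R)
    (Mod : Type*) [AddCommGroup Mod] [Module R Mod] (φ : Hk.carrier →ₗ[R] Mod) : Prop :=
  Function.Surjective φ ∧
  LinearMap.ker φ = Submodule.span R
    {h : Hk.carrier | ∃ (g : Hk.carrier) (i : B), i ∈ J ∧
      h = g * (Hk.T (cs.simple i) - algebraMap R Hk.carrier a)}

/-- `C` is the parabolic Kazhdan–Lusztig basis element `C_w^{J,a}` of `H^{J,a}`:
`C = Σ_{y ∈ W^J, y ≤ w} P^{J,a}_{y,w} T_y^{J,a}` with `P^{J,a}_{w,w} = 1`,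
`P^{J,a}_{y,w} ∈ ⊕_{i=0}^{ℓ(w)-ℓ(y)-1} R_i` for `y < w`, and `barJ C = q^{-ℓ(w)} C`,
where `b` is the basis `(T_y^{J,a})_{y ∈ W^J}` of `H^{J,a}` and `barJ` its bar involution.
(The coefficient `P^{J,a}_{y,w}` of `C_w^{J,a}` is `b.repr C y`.) -/
def IsKLEltJ (K : KLRing R) {J : Set B} {Mod : Type*} [AddCommGroup Mod] [Module R Mod]
    (b : Module.Basis (minReps cs J) R Mod) (barJ : Mod →+ Mod)
    (w : minReps cs J) (C : Mod) : Prop :=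
  b.repr C w = 1 ∧
  (∀ y : minReps cs J, b.repr C y ≠ 0 → bruhatLE cs y.1 w.1) ∧
  (∀ y : minReps cs J, bruhatLE cs y.1 w.1 → y ≠ w →
    b.repr C y ∈ K.gradeSum (cs.length w.1 - cs.length y.1)) ∧
  barJ C = K.qinv ^ cs.length w.1 • C

/-! The generators satisfy `T_s² = (q - 1) T_s + q`, so for invertible `q` each `T_s`, hence each
`T_w = T_{s₁} ⋯ T_{sₖ}` (reduced expression), is invertible and `j` can be defined on the basis.
The element `j(T_s) = (q - 1) - T_s` satisfies the same quadratic relation, which is exactly what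
makes `j(T_s h) = j(T_s) j(h)` hold also when `s` is a left descent; multiplicativity then follows
since the `T_s` generate the `T_w` as a monoid. Finally `j((T_w)⁻¹) = (-q)^{-ℓ(w)} T_{w⁻¹}` gives
`j ∘ j = id`. -/

section Quadratic

variable {A : Type*} [Ring A] [Algebra R A] {q qinv : R} {t : A}

lemma mul_inv_of_quadratic (hq : q * qinv = 1) (ht : t * t = (q - 1) • t + q • 1) :
    t * (qinv • t + (qinv - 1) • 1) = 1 := by
  rw [mul_add, mul_smul_comm, mul_smul_comm, ht, mul_one]
  linear_combination (norm := module) hq • (t + 1)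

lemma inv_mul_of_quadratic (hq : q * qinv = 1) (ht : t * t = (q - 1) • t + q • 1) :
    (qinv • t + (qinv - 1) • 1) * t = 1 := by
  rw [add_mul, smul_mul_assoc, smul_mul_assoc, ht, one_mul]
  linear_combination (norm := module) hq • (t + 1)

lemma inverse_of_quadratic (hq : q * qinv = 1) (ht : t * t = (q - 1) • t + q • 1) :
    Ring.inverse t = qinv • t + (qinv - 1) • 1 :=
  Ring.inverse_unit ⟨t, _, mul_inv_of_quadratic hq ht, inv_mul_of_quadratic hq ht⟩

lemma isUnit_of_quadratic (hq : q * qinv = 1) (ht : t * t = (q - 1) • t + q • 1) : IsUnit t :=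
  ⟨⟨t, _, mul_inv_of_quadratic hq ht, inv_mul_of_quadratic hq ht⟩, rfl⟩

lemma quadratic_sub_of_quadratic (ht : t * t = (q - 1) • t + q • 1) :
    ((q - 1) • 1 - t) * ((q - 1) • 1 - t) = (q - 1) • ((q - 1) • 1 - t) + q • 1 := by
  simp only [sub_mul, mul_sub, smul_mul_assoc, mul_smul_comm, one_mul, mul_one, ht]
  module

end Quadratic

namespace Hecke

variable {q : R} (Hk : Hecke cs R q)

lemma T_one : Hk.T 1 = 1 := by
  have h : LinearMap.mulRight R (Hk.T 1) = LinearMap.id :=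
    Hk.basis.ext fun w => by simp [Hk.basis_eq, Hk.T_mul w 1]
  simpa using LinearMap.congr_fun h 1

lemma T_simple_mul_self (i : B) :
    Hk.T (cs.simple i) * Hk.T (cs.simple i) = (q - 1) • Hk.T (cs.simple i) + q • 1 := by
  have h := Hk.T_quad i
  rw [Algebra.algebraMap_eq_smul_one, add_mul, mul_sub, mul_sub, mul_smul_comm, mul_one,
    one_mul, one_mul] at h
  linear_combination (norm := module) h

lemma T_simple_mul_of_not_isLeftDescent {i : B} {w : W} (h : ¬ cs.IsLeftDescent w i) :
    Hk.T (cs.simple i) * Hk.T w = Hk.T (cs.simple i * w) :=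
  Hk.T_mul _ _ (by rw [cs.not_isLeftDescent_iff.mp h, cs.length_simple, add_comm])

lemma T_simple_mul_of_isLeftDescent {i : B} {w : W} (h : cs.IsLeftDescent w i) :
    Hk.T (cs.simple i) * Hk.T (cs.simple i * w) = Hk.T w := by
  rw [T_simple_mul_of_not_isLeftDescent Hk (cs.isLeftDescent_iff_not_isLeftDescent_mul.mp h),
    ← mul_assoc, cs.simple_mul_simple_self, one_mul]

lemma T_mem_closure_T_simple (w : W) :
    Hk.T w ∈ Submonoid.closure (Set.range fun i => Hk.T (cs.simple i)) := by
  induction hn : cs.length w using Nat.strong_induction_on generalizing w with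
  | _ n ih =>
    rcases eq_or_ne w 1 with rfl | hw
    · rw [T_one]
      exact Submonoid.one_mem _
    obtain ⟨i, hi⟩ := cs.exists_leftDescent_of_ne_one hw
    rw [← T_simple_mul_of_isLeftDescent Hk hi]
    exact Submonoid.mul_mem _ (Submonoid.subset_closure ⟨i, rfl⟩)
      (ih _ (hn ▸ cs.isLeftDescent_iff.mp hi ▸ Nat.lt_succ_self _) _ rfl)

lemma algHom_ext {f g : Hk.carrier →ₐ[R] Hk.carrier} (h : ∀ w, f (Hk.T w) = g (Hk.T w)) :
    f = g :=
  AlgHom.toLinearMap_injective <| Hk.basis.ext fun w => by simpa [Hk.basis_eq] using h w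

noncomputable def jLinear : Hk.carrier →ₗ[R] Hk.carrier :=
  Hk.basis.constr R fun w => (-q) ^ cs.length w • Ring.inverse (Hk.T w⁻¹)

lemma jLinear_T (w : W) :
    Hk.jLinear (Hk.T w) = (-q) ^ cs.length w • Ring.inverse (Hk.T w⁻¹) := by
  rw [← Hk.basis_eq, jLinear, Module.Basis.constr_basis]

lemma jLinear_one : Hk.jLinear 1 = 1 := by
  rw [← Hk.T_one, jLinear_T, inv_one, Hk.T_one, Ring.inverse_one, cs.length_one, pow_zero,
    one_smul]

section Invertible

variable {qinv : R}

lemma inverse_T_simple (hq : q * qinv = 1) (i : B) :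
    Ring.inverse (Hk.T (cs.simple i)) = qinv • Hk.T (cs.simple i) + (qinv - 1) • 1 :=
  inverse_of_quadratic hq (Hk.T_simple_mul_self i)

lemma isUnit_T (hq : q * qinv = 1) (w : W) : IsUnit (Hk.T w) := by
  refine Submonoid.closure_le (S := IsUnit.submonoid Hk.carrier) |>.mpr ?_
    (Hk.T_mem_closure_T_simple w)
  rintro _ ⟨i, rfl⟩
  exact isUnit_of_quadratic hq (Hk.T_simple_mul_self i)

lemma jLinear_T_simple (hq : q * qinv = 1) (i : B) :
    Hk.jLinear (Hk.T (cs.simple i)) = (q - 1) • 1 - Hk.T (cs.simple i) := by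
  rw [jLinear_T, cs.inv_simple, cs.length_simple, pow_one, Hk.inverse_T_simple hq]
  linear_combination (norm := module) (-hq) • (Hk.T (cs.simple i) + 1)

lemma jLinear_T_simple_mul_T_of_not_isLeftDescent (hq : q * qinv = 1) {i : B} {v : W}
    (hv : ¬ cs.IsLeftDescent v i) :
    Hk.jLinear (Hk.T (cs.simple i) * Hk.T v)
      = Hk.jLinear (Hk.T (cs.simple i)) * Hk.jLinear (Hk.T v) := by
  have hlen : cs.length (cs.simple i * v) = cs.length v + 1 := cs.not_isLeftDescent_iff.mp hv
  have hinv : (cs.simple i * v)⁻¹ = v⁻¹ * cs.simple i := by rw [mul_inv_rev, cs.inv_simple]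
  have hT : Hk.T v⁻¹ * Hk.T (cs.simple i) = Hk.T (cs.simple i * v)⁻¹ := by
    rw [hinv]
    exact Hk.T_mul _ _ (by rw [← hinv, cs.length_inv, cs.length_inv, hlen, cs.length_simple])
  rw [Hk.T_simple_mul_of_not_isLeftDescent hv, jLinear_T, jLinear_T, jLinear_T, ← hT,
    Ring.inverse_mul (.inl (Hk.isUnit_T hq _)), cs.inv_simple, hlen, cs.length_simple, pow_one,
    smul_mul_smul_comm, pow_succ']

lemma jLinear_T_simple_mul_T (hq : q * qinv = 1) (i : B) (v : W) :
    Hk.jLinear (Hk.T (cs.simple i) * Hk.T v)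
      = Hk.jLinear (Hk.T (cs.simple i)) * Hk.jLinear (Hk.T v) := by
  by_cases hv : cs.IsLeftDescent v i
  · have hTv := Hk.T_simple_mul_of_isLeftDescent hv
    have ascent := Hk.jLinear_T_simple_mul_T_of_not_isLeftDescent hq
      (cs.isLeftDescent_iff_not_isLeftDescent_mul.mp hv)
    rw [hTv] at ascent
    have ht := Hk.jLinear_T_simple hq i ▸ quadratic_sub_of_quadratic (Hk.T_simple_mul_self i)
    set t := Hk.jLinear (Hk.T (cs.simple i))
    calc Hk.jLinear (Hk.T (cs.simple i) * Hk.T v)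
        = Hk.jLinear ((Hk.T (cs.simple i) * Hk.T (cs.simple i)) * Hk.T (cs.simple i * v)) := by
          rw [mul_assoc, hTv]
      _ = (q - 1) • Hk.jLinear (Hk.T v) + q • Hk.jLinear (Hk.T (cs.simple i * v)) := by
          rw [T_simple_mul_self, add_mul, smul_mul_assoc, smul_mul_assoc, one_mul, hTv, map_add,
            map_smul, map_smul]
      _ = (t * t) * Hk.jLinear (Hk.T (cs.simple i * v)) := by
          rw [ht, add_mul, smul_mul_assoc, smul_mul_assoc, one_mul, ascent]
      _ = t * Hk.jLinear (Hk.T v) := by rw [mul_assoc, ascent]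
  · exact Hk.jLinear_T_simple_mul_T_of_not_isLeftDescent hq hv

lemma jLinear_T_simple_mul (hq : q * qinv = 1) (i : B) (x : Hk.carrier) :
    Hk.jLinear (Hk.T (cs.simple i) * x) = Hk.jLinear (Hk.T (cs.simple i)) * Hk.jLinear x := by
  have h : Hk.jLinear ∘ₗ LinearMap.mulLeft R (Hk.T (cs.simple i))
      = LinearMap.mulLeft R (Hk.jLinear (Hk.T (cs.simple i))) ∘ₗ Hk.jLinear :=
    Hk.basis.ext fun v => by simpa [Hk.basis_eq] using Hk.jLinear_T_simple_mul_T hq i v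
  exact LinearMap.congr_fun h x

lemma jLinear_mul (hq : q * qinv = 1) (x y : Hk.carrier) :
    Hk.jLinear (x * y) = Hk.jLinear x * Hk.jLinear y := by
  have hclosure : ∀ a ∈ Submonoid.closure (Set.range fun i => Hk.T (cs.simple i)),
      ∀ y, Hk.jLinear (a * y) = Hk.jLinear a * Hk.jLinear y := by
    intro a ha
    induction ha using Submonoid.closure_induction with
    | mem _ hs =>
      obtain ⟨i, rfl⟩ := hs
      exact Hk.jLinear_T_simple_mul hq i
    | one => simp [jLinear_one]
    | mul a b _ _ ha hb => intro y; rw [mul_assoc, ha, hb, ← mul_assoc, ← ha]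
  have h : Hk.jLinear ∘ₗ LinearMap.mulRight R y
      = LinearMap.mulRight R (Hk.jLinear y) ∘ₗ Hk.jLinear :=
    Hk.basis.ext fun w => by simpa [Hk.basis_eq] using hclosure _ (Hk.T_mem_closure_T_simple w) y
  exact LinearMap.congr_fun h x

noncomputable def j (hq : q * qinv = 1) : Hk.carrier →ₐ[R] Hk.carrier :=
  AlgHom.ofLinearMap Hk.jLinear Hk.jLinear_one (Hk.jLinear_mul hq)

lemma j_T (hq : q * qinv = 1) (w : W) :
    Hk.j hq (Hk.T w) = (-q) ^ cs.length w • Ring.inverse (Hk.T w⁻¹) :=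
  Hk.jLinear_T w

lemma j_inverse_T (hq : q * qinv = 1) (w : W) :
    Hk.j hq (Ring.inverse (Hk.T w)) = (-qinv) ^ cs.length w • Hk.T w⁻¹ := by
  refine left_inv_eq_right_inv (a := Hk.j hq (Hk.T w)) ?_ ?_
  · rw [← map_mul, Ring.inverse_mul_cancel _ (Hk.isUnit_T hq w), map_one]
  · rw [j_T, smul_mul_smul_comm, ← mul_pow, Ring.inverse_mul_cancel _ (Hk.isUnit_T hq w⁻¹),
      neg_mul_neg, hq, one_pow, one_smul]

lemma j_j (hq : q * qinv = 1) (x : Hk.carrier) : Hk.j hq (Hk.j hq x) = x := by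
  have h : (Hk.j hq).comp (Hk.j hq) = AlgHom.id R Hk.carrier := Hk.algHom_ext fun w => by
    rw [AlgHom.comp_apply, j_T, map_smul, j_inverse_T, cs.length_inv, inv_inv, smul_smul,
      ← mul_pow, neg_mul_neg, hq, one_pow, one_smul, AlgHom.id_apply]
  exact AlgHom.congr_fun h x

end Invertible

end Hecke

/-- The assignment `j(Σ r_w T_w) = Σ r_w (-q)^{ℓ(w)} (T_{w⁻¹})⁻¹` is a
well-defined involutive endomorphism of the Hecke algebra `H` regarded as an `R`-algebra
(`R`-linear, multiplicative, and `j ∘ j = id`). -/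
theorem statement1 (K : KLRing R) (Hk : Hecke cs R K.q) :
    ∃ j : Hk.carrier →ₐ[R] Hk.carrier,
      IsJ K Hk j ∧
      (∀ h : Hk.carrier, j (j h) = h) ∧
      ∀ j' : Hk.carrier →ₐ[R] Hk.carrier, IsJ K Hk j' → j' = j :=
  ⟨Hk.j K.q_qinv, Hk.j_T K.q_qinv, Hk.j_j K.q_qinv,
    fun _ hj' => Hk.algHom_ext fun w => by rw [hj' w, Hk.j_T]⟩

end KLPaper
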